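/- For every λ > 0 and all x, y ∈ V, there exists f ∈ Lip_w^1(V) such that ⟨J_λ f, δ_x − δ_y⟩ = KD_λ(x,y) (a λ-nonlinear Kantorovich potential). -/

import Mathlib

/-!
`J_λ f` exists because the coercive Moreau–Yosida functional
`‖g - f‖² + λ ∑_e w(e) (max_{x,y ∈ e} (D⁻¹g)(x) - (D⁻¹g)(y))²` has a minimiser `g`: its one-sided
directional derivatives at `g` (Danskin) are nonnegative, and a separation argument turns this into
`(f - g)/λ ∈ 𝓛(g)`. Monotonicity of `𝓛` gives uniqueness and `‖J_λ f - J_λ f'‖ ≤ ‖f - f'‖`, so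
`f ↦ ⟨J_λ f, δ_x - δ_y⟩` is continuous. Since `𝓛(g)` does not change when a multiple of the degree
vector is added to `g`, neither this map nor weighted Lipschitzness changes when such a multiple is
added to `f`; hence the supremum defining `KD_λ(x,y)` may be taken over the compact set of weighted
1-Lipschitz `f` with `f(x) = 0`, where it is attained.
-/

open scoped BigOperators

noncomputable section

namespace HypRicci

variable {V : Type*} [Fintype V] [DecidableEq V]

/-- A finite weighted hypergraph on vertex set `V`: a finite set of nonempty
hyperedges together with positive weights. -/
structure Hypergraph (V : Type*) [Fintype V] [DecidableEq V] : Type _ where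
  E : Finset (Finset V)
  w : Finset V → ℝ
  w_pos : ∀ e ∈ E, 0 < w e
  e_nonempty : ∀ e ∈ E, e.Nonempty

/-- Degree `d_x = ∑_{e ∋ x} w(e)`. -/
def deg (H : Hypergraph V) (x : V) : ℝ := ∑ e ∈ H.E, if x ∈ e then H.w e else 0

/-- Volume `vol(V) = ∑_x d_x`. -/
def vol (H : Hypergraph V) : ℝ := ∑ x, deg H x

/-- Weighted inner product `⟨f,g⟩ = ∑_x f(x) g(x) / d_x`. -/
def inn (H : Hypergraph V) (f g : V → ℝ) : ℝ := ∑ x, f x * g x / deg H x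

/-- Norm associated to `inn`. -/
def nrm (H : Hypergraph V) (f : V → ℝ) : ℝ := Real.sqrt (inn H f f)

/-- Indicator function `δ_x`. -/
def delta (x : V) : V → ℝ := fun z => if z = x then 1 else 0

/-- Standard (unweighted) dot product `u^⊤ v`. -/
def dot (u v : V → ℝ) : ℝ := ∑ x, u x * v x

/-- Base polytope `B_e = conv{δ_x − δ_y : x,y ∈ e}`. -/
def Bp (e : Finset V) : Set (V → ℝ) :=
  convexHull ℝ {b : V → ℝ | ∃ x ∈ e, ∃ y ∈ e, b = delta x - delta y}

/-- The multivalued hypergraph Laplacian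
`L(f) = {∑_e w(e) (b_e^⊤ f) b_e : b_e ∈ argmax_{b ∈ B_e} b^⊤ f}`. -/
def Lap (H : Hypergraph V) (f : V → ℝ) : Set (V → ℝ) :=
  { g | ∃ b : Finset V → (V → ℝ),
      (∀ e ∈ H.E, b e ∈ Bp e ∧ ∀ b' ∈ Bp e, dot b' f ≤ dot (b e) f) ∧
      g = ∑ e ∈ H.E, (H.w e * dot (b e) f) • b e }

/-- `D⁻¹ f`. -/
def Dinv (H : Hypergraph V) (f : V → ℝ) : V → ℝ := fun x => f x / deg H x

/-- Normalized Laplacian `𝓛(f) = L(D⁻¹ f)`. -/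
def NL (H : Hypergraph V) (f : V → ℝ) : Set (V → ℝ) := Lap H (Dinv H f)

/-- The resolvent `J_λ = (I + λ𝓛)⁻¹`: it sends `f` to the (unique) `g` with
`f ∈ g + λ 𝓛(g)`. -/
def Resolvent (H : Hypergraph V) (l : ℝ) (f : V → ℝ) : V → ℝ :=
  Classical.epsilon fun g => ∃ h ∈ NL H g, f = g + l • h

/-- Adjacency: `x ∼ y` iff some hyperedge contains both. -/
def Adj (H : Hypergraph V) (x y : V) : Prop := ∃ e ∈ H.E, x ∈ e ∧ y ∈ e

/-- There is a chain of length `n` of successively adjacent vertices from `x` to `y`. -/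
def chainProp (H : Hypergraph V) (x y : V) (n : ℕ) : Prop :=
  ∃ z : ℕ → V, z 0 = x ∧ z n = y ∧ ∀ i < n, Adj H (z i) (z (i + 1))

/-- Connectedness of the hypergraph. -/
def Connected (H : Hypergraph V) : Prop := ∀ x y : V, ∃ n, chainProp H x y n

/-- Graph distance (as a natural number). -/
def hdistN (H : Hypergraph V) (x y : V) : ℕ := sInf {n | chainProp H x y n}

/-- Graph distance `d(x,y)` as a real number. -/
def gdist (H : Hypergraph V) (x y : V) : ℝ := (hdistN H x y : ℝ)

/-- Diameter `diam(H) = max_{x,y} d(x,y)`. -/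
def hdiam (H : Hypergraph V) : ℝ :=
  (((Finset.univ : Finset (V × V)).sup fun p => hdistN H p.1 p.2 : ℕ) : ℝ)

/-- Weighted `1`-Lipschitz functions: `⟨f, δ_x − δ_y⟩ ≤ d(x,y)` for all `x, y`. -/
def Lip1 (H : Hypergraph V) : Set (V → ℝ) :=
  { f | ∀ x y : V, inn H f (delta x - delta y) ≤ gdist H x y }

/-- The `λ`-nonlinear Kantorovich difference. -/
def KD (H : Hypergraph V) (l : ℝ) (x y : V) : ℝ :=
  sSup { r | ∃ f ∈ Lip1 H, r = inn H (Resolvent H l f) (delta x - delta y) }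

/-- `κ_λ(x,y) = 1 − KD_λ(x,y)/d(x,y)`. -/
def kappa (H : Hypergraph V) (l : ℝ) (x y : V) : ℝ := 1 - KD H l x y / gdist H x y

/-- Lower coarse Ricci curvature `κ̲(x,y) = liminf_{λ↓0} κ_λ(x,y)/λ`. -/
def kappaLower (H : Hypergraph V) (x y : V) : EReal :=
  Filter.liminf (fun l : ℝ => ((kappa H l x y / l : ℝ) : EReal)) (nhdsWithin 0 (Set.Ioi 0))

/-- Upper coarse Ricci curvature `κ̄(x,y) = limsup_{λ↓0} κ_λ(x,y)/λ`. -/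
def kappaUpper (H : Hypergraph V) (x y : V) : EReal :=
  Filter.limsup (fun l : ℝ => ((kappa H l x y / l : ℝ) : EReal)) (nhdsWithin 0 (Set.Ioi 0))

/-- Canonical restriction `𝓛⁰ f`: the unique element of minimal norm of `𝓛(f)`. -/
def L0 (H : Hypergraph V) (f : V → ℝ) : V → ℝ :=
  Classical.epsilon fun g => g ∈ NL H f ∧ ∀ h ∈ NL H f, nrm H g ≤ nrm H h

/-- The stationary distribution `π(x) = d_x / vol(V)`. -/
def piH (H : Hypergraph V) : V → ℝ := fun x => deg H x / vol H

/-- The energy `Q(h) = (1/2) ∑_e w(e) max_{x,y ∈ e} (h(x) − h(y))²`. -/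
def Qform (H : Hypergraph V) (h : V → ℝ) : ℝ :=
  (1 / 2) * ∑ e ∈ H.E, H.w e * sSup { r | ∃ x ∈ e, ∃ y ∈ e, r = (h x - h y) ^ 2 }

end HypRicci

open Filter Topology

lemma le_csSup_image_finset {α : Type*} {s : Finset α} {a : α} (F : α → ℝ) (ha : a ∈ s) :
    F a ≤ sSup (F '' s) :=
  le_csSup (s.finite_toSet.image F).bddAbove (Set.mem_image_of_mem F ha)

lemma exists_eq_csSup_image_finset {α : Type*} {s : Finset α} (F : α → ℝ) (hs : s.Nonempty) :
    ∃ a ∈ s, F a = sSup (F '' s) :=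
  (hs.to_set.image F).csSup_mem (s.finite_toSet.image F)

lemma nonneg_of_eventually_nonneg_mul_add_sq {a b : ℝ}
    (h : ∀ᶠ t in 𝓝[>] (0 : ℝ), 0 ≤ t * a + t ^ 2 * b) : 0 ≤ a := by
  have hlim : Tendsto (fun t : ℝ => a + t * b) (𝓝[>] 0) (𝓝 a) :=
    (Continuous.tendsto' (by fun_prop) 0 a (by simp)).mono_left nhdsWithin_le_nhds
  refine ge_of_tendsto hlim ?_
  filter_upwards [h, self_mem_nhdsWithin] with t ht (htpos : 0 < t)
  exact nonneg_of_mul_nonneg_right (by linear_combination ht) htpos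

namespace HypRicci

section MaxDiff

variable {V : Type*}

/-- `maxDiff e v = max_{b ∈ B_e} b^⊤ v`, the support function of the base polytope. -/
def maxDiff (e : Finset V) (v : V → ℝ) : ℝ :=
  sSup ((fun p : V × V => v p.1 - v p.2) '' ↑(e ×ˢ e))

lemma sub_le_maxDiff {e : Finset V} {p : V × V} (hp : p ∈ e ×ˢ e) (v : V → ℝ) :
    v p.1 - v p.2 ≤ maxDiff e v :=
  le_csSup_image_finset (fun p : V × V => v p.1 - v p.2) hp

lemma exists_eq_maxDiff {e : Finset V} (he : e.Nonempty) (v : V → ℝ) :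
    ∃ p ∈ e ×ˢ e, v p.1 - v p.2 = maxDiff e v :=
  exists_eq_csSup_image_finset _ (he.product he)

lemma maxDiff_nonneg {e : Finset V} (he : e.Nonempty) (v : V → ℝ) : 0 ≤ maxDiff e v := by
  obtain ⟨x, hx⟩ := he
  simpa using sub_le_maxDiff (Finset.mem_product.2 ⟨hx, hx⟩ : (x, x) ∈ e ×ˢ e) v

lemma maxDiff_add_const (e : Finset V) (v : V → ℝ) (c : ℝ) :
    maxDiff e (v + fun _ => c) = maxDiff e v := by
  simp only [maxDiff, Pi.add_apply, add_sub_add_right_eq_sub]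

lemma continuous_maxDiff {e : Finset V} (he : e.Nonempty) : Continuous (maxDiff e) := by
  have h : maxDiff e = fun v => (e ×ˢ e).sup' (he.product he) fun p => v p.1 - v p.2 :=
    funext fun v => (Finset.sup'_eq_csSup_image _ _ _).symm
  rw [h]
  exact Continuous.finset_sup'_apply _ fun p _ => by fun_prop

def argmaxPairs (e : Finset V) (v : V → ℝ) : Finset (V × V) :=
  (e ×ˢ e).filter fun p => v p.1 - v p.2 = maxDiff e v

lemma mem_argmaxPairs {e : Finset V} {v : V → ℝ} {p : V × V} :
    p ∈ argmaxPairs e v ↔ p ∈ e ×ˢ e ∧ v p.1 - v p.2 = maxDiff e v :=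
  Finset.mem_filter

lemma argmaxPairs_nonempty {e : Finset V} (he : e.Nonempty) (v : V → ℝ) :
    (argmaxPairs e v).Nonempty := by
  obtain ⟨p, hp, hpv⟩ := exists_eq_maxDiff he v
  exact ⟨p, mem_argmaxPairs.2 ⟨hp, hpv⟩⟩

/-- The right derivative of `maxDiff e` at `v` in the direction `w` (Danskin's formula). -/
def dirMaxDiff (e : Finset V) (v w : V → ℝ) : ℝ :=
  sSup ((fun p : V × V => w p.1 - w p.2) '' ↑(argmaxPairs e v))

lemma eventually_maxDiff_add_smul {e : Finset V} (he : e.Nonempty) (v w : V → ℝ) :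
    ∀ᶠ t in 𝓝[>] (0 : ℝ), maxDiff e (v + t • w) = maxDiff e v + t * dirMaxDiff e v w := by
  set m := maxDiff e v
  set s := dirMaxDiff e v w
  have hoff : ∀ᶠ t in 𝓝 (0 : ℝ), ∀ p ∈ e ×ˢ e, p ∉ argmaxPairs e v →
      v p.1 - v p.2 + t * (w p.1 - w p.2) < m + t * s := by
    refine (eventually_all_finset _).2 fun p hp => ?_
    by_cases hpA : p ∈ argmaxPairs e v
    · exact Eventually.of_forall fun _ h => absurd hpA h
    have hlt : v p.1 - v p.2 < m :=
      (sub_le_maxDiff hp v).lt_of_ne fun h => hpA (mem_argmaxPairs.2 ⟨hp, h⟩)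
    exact (ContinuousAt.eventually_lt (by fun_prop) (by fun_prop) (by simpa using hlt)).mono
      fun t ht _ => ht
  filter_upwards [nhdsWithin_le_nhds hoff, self_mem_nhdsWithin] with t ht (htpos : 0 < t)
  apply le_antisymm
  · obtain ⟨p, hp, hpv⟩ := exists_eq_maxDiff he (v + t • w)
    simp only [← hpv, Pi.add_apply, Pi.smul_apply, smul_eq_mul]
    by_cases hpA : p ∈ argmaxPairs e v
    · have hs := le_csSup_image_finset (fun p : V × V => w p.1 - w p.2) hpA
      have hm := (mem_argmaxPairs.1 hpA).2
      change _ ≤ s at hs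
      change _ = m at hm
      nlinarith [mul_le_mul_of_nonneg_left hs htpos.le]
    · linarith [ht p hp hpA]
  · obtain ⟨p, hpA, hps⟩ := exists_eq_csSup_image_finset (fun p : V × V => w p.1 - w p.2)
      (argmaxPairs_nonempty he v)
    have h := sub_le_maxDiff (mem_argmaxPairs.1 hpA).1 (v + t • w)
    simp only [Pi.add_apply, Pi.smul_apply, smul_eq_mul] at h
    have hm := (mem_argmaxPairs.1 hpA).2
    change w p.1 - w p.2 = s at hps
    linarith [congrArg (t * ·) hps]

end MaxDiff

variable {V : Type*} [Fintype V]

lemma dot_eq_dotProduct (u v : V → ℝ) : dot u v = u ⬝ᵥ v := rfl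

lemma isLinearMap_dot_left (v : V → ℝ) : IsLinearMap ℝ fun b : V → ℝ => dot b v :=
  ⟨fun _ _ => add_dotProduct _ _ _, fun _ _ => smul_dotProduct _ _ _⟩

variable [DecidableEq V]

lemma dot_delta_sub_delta (x y : V) (v : V → ℝ) : dot (delta x - delta y) v = v x - v y := by
  simp [dot, delta, sub_mul, Finset.sum_sub_distrib]

lemma inn_delta_sub_delta (H : Hypergraph V) (f : V → ℝ) (a b : V) :
    inn H f (delta a - delta b) = f a / deg H a - f b / deg H b := by
  simp [inn, delta, mul_sub, sub_div, Finset.sum_sub_distrib, ite_div]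

lemma inn_eq_dot_Dinv (H : Hypergraph V) (a b : V → ℝ) : inn H a b = dot a (Dinv H b) :=
  Finset.sum_congr rfl fun _ _ => mul_div_assoc _ _ _

lemma inn_zero_left (H : Hypergraph V) (u : V → ℝ) : inn H 0 u = 0 := by
  simp [inn]

lemma sq_le_deg_mul_inn_self {H : Hypergraph V} (hdeg : ∀ x, 0 < deg H x) (u : V → ℝ) (z : V) :
    u z ^ 2 ≤ deg H z * inn H u u := by
  have h : u z * u z / deg H z ≤ inn H u u :=
    Finset.single_le_sum (f := fun z => u z * u z / deg H z)
      (fun z _ => div_nonneg (mul_self_nonneg _) (hdeg z).le) (Finset.mem_univ z)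
  rw [div_le_iff₀' (hdeg z)] at h
  rwa [sq]

lemma eq_of_inn_sub_self_nonpos {H : Hypergraph V} (hdeg : ∀ x, 0 < deg H x) {a b : V → ℝ}
    (h : inn H (a - b) (a - b) ≤ 0) : a = b := by
  funext z
  have hz : (a - b) z ^ 2 ≤ 0 :=
    (sq_le_deg_mul_inn_self hdeg (a - b) z).trans (mul_nonpos_of_nonneg_of_nonpos (hdeg z).le h)
  exact sub_eq_zero.1 (pow_eq_zero_iff two_ne_zero |>.1 (le_antisymm hz (sq_nonneg _)))

lemma two_mul_inn_le {H : Hypergraph V} (hdeg : ∀ x, 0 < deg H x) (a u : V → ℝ) :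
    2 * inn H a u ≤ inn H a a + inn H u u := by
  simp only [inn, Finset.mul_sum, ← Finset.sum_add_distrib]
  refine Finset.sum_le_sum fun z _ => ?_
  rw [← mul_div_assoc, ← add_div]
  exact div_le_div_of_nonneg_right (by nlinarith [sq_nonneg (a z - u z)]) (hdeg z).le

lemma norm_sq_le_vol_mul_inn_self {H : Hypergraph V} (hdeg : ∀ x, 0 < deg H x)
    (u : V → ℝ) : ‖u‖ ^ 2 ≤ vol H * inn H u u := by
  have hinn : 0 ≤ inn H u u :=
    Finset.sum_nonneg fun z _ => div_nonneg (mul_self_nonneg _) (hdeg z).le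
  have hvol : 0 ≤ vol H := Finset.sum_nonneg fun z _ => (hdeg z).le
  rw [← Real.le_sqrt (norm_nonneg _) (mul_nonneg hvol hinn)]
  refine (pi_norm_le_iff_of_nonneg (Real.sqrt_nonneg _)).2 fun z => ?_
  rw [Real.norm_eq_abs]
  refine Real.abs_le_sqrt ((sq_le_deg_mul_inn_self hdeg u z).trans ?_)
  exact mul_le_mul_of_nonneg_right
    (Finset.single_le_sum (fun z _ => (hdeg z).le) (Finset.mem_univ z)) hinn

lemma dot_le_maxDiff_of_mem_bp {e : Finset V} {b : V → ℝ} (hb : b ∈ Bp e) (v : V → ℝ) :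
    dot b v ≤ maxDiff e v := by
  refine convexHull_min ?_ (convex_halfSpace_le (isLinearMap_dot_left v) _) hb
  rintro _ ⟨x, hx, y, hy, rfl⟩
  change dot _ v ≤ _
  rw [dot_delta_sub_delta]
  exact sub_le_maxDiff (Finset.mem_product.2 ⟨hx, hy⟩ : (x, y) ∈ e ×ˢ e) v

lemma dot_const_of_mem_bp {e : Finset V} {b : V → ℝ} (hb : b ∈ Bp e) (c : ℝ) :
    dot b (fun _ => c) = 0 := by
  refine convexHull_min ?_ (convex_hyperplane (isLinearMap_dot_left _) 0) hb
  rintro _ ⟨x, hx, y, hy, rfl⟩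
  change dot _ _ = 0
  rw [dot_delta_sub_delta, sub_self]

lemma dot_eq_maxDiff_of_isMax {e : Finset V} (he : e.Nonempty) {b v : V → ℝ} (hb : b ∈ Bp e)
    (hmax : ∀ b' ∈ Bp e, dot b' v ≤ dot b v) : dot b v = maxDiff e v := by
  refine (dot_le_maxDiff_of_mem_bp hb v).antisymm ?_
  obtain ⟨⟨x, y⟩, hp, hpv⟩ := exists_eq_maxDiff he v
  obtain ⟨hx, hy⟩ := Finset.mem_product.1 hp
  rw [← hpv, ← dot_delta_sub_delta]
  exact hmax _ (subset_convexHull ℝ _ ⟨x, hx, y, hy, rfl⟩)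

lemma mem_lap_iff {H : Hypergraph V} {v h : V → ℝ} :
    h ∈ Lap H v ↔ ∃ b : Finset V → V → ℝ,
      (∀ e ∈ H.E, b e ∈ Bp e ∧ dot (b e) v = maxDiff e v) ∧
        h = ∑ e ∈ H.E, (H.w e * maxDiff e v) • b e := by
  constructor
  · rintro ⟨b, hb, rfl⟩
    have hbv : ∀ e ∈ H.E, dot (b e) v = maxDiff e v := fun e he =>
      dot_eq_maxDiff_of_isMax (H.e_nonempty e he) (hb e he).1 (hb e he).2
    exact ⟨b, fun e he => ⟨(hb e he).1, hbv e he⟩,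
      Finset.sum_congr rfl fun e he => by rw [hbv e he]⟩
  · rintro ⟨b, hb, rfl⟩
    refine ⟨b, fun e he => ⟨(hb e he).1, fun b' hb' => ?_⟩,
      Finset.sum_congr rfl fun e he => by rw [(hb e he).2]⟩
    rw [(hb e he).2]
    exact dot_le_maxDiff_of_mem_bp hb' v

lemma convex_lap (H : Hypergraph V) (v : V → ℝ) : Convex ℝ (Lap H v) := by
  rintro _ hh₁ _ hh₂ a₁ a₂ ha₁ ha₂ hsum
  obtain ⟨b₁, hb₁, rfl⟩ := mem_lap_iff.1 hh₁
  obtain ⟨b₂, hb₂, rfl⟩ := mem_lap_iff.1 hh₂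
  refine mem_lap_iff.2 ⟨fun e => a₁ • b₁ e + a₂ • b₂ e, fun e he => ⟨?_, ?_⟩, ?_⟩
  · exact convex_convexHull ℝ _ (hb₁ e he).1 (hb₂ e he).1 ha₁ ha₂ hsum
  · simp only [dot_eq_dotProduct, add_dotProduct, smul_dotProduct, smul_eq_mul] at hb₁ hb₂ ⊢
    rw [(hb₁ e he).2, (hb₂ e he).2, ← add_mul, hsum, one_mul]
  · simp only [Finset.smul_sum, ← Finset.sum_add_distrib, smul_add, smul_comm a₁, smul_comm a₂]

lemma lap_monotone {H : Hypergraph V} {v₁ v₂ h₁ h₂ : V → ℝ} (hh₁ : h₁ ∈ Lap H v₁)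
    (hh₂ : h₂ ∈ Lap H v₂) : 0 ≤ dot (h₁ - h₂) (v₁ - v₂) := by
  obtain ⟨b₁, hb₁, rfl⟩ := mem_lap_iff.1 hh₁
  obtain ⟨b₂, hb₂, rfl⟩ := mem_lap_iff.1 hh₂
  simp only [dot_eq_dotProduct, sub_dotProduct, sum_dotProduct, smul_dotProduct, dotProduct_sub,
    smul_eq_mul, ← Finset.sum_sub_distrib]
  refine Finset.sum_nonneg fun e he => ?_
  have hne := H.e_nonempty e he
  have h₁₂ := dot_le_maxDiff_of_mem_bp (hb₁ e he).1 v₂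
  have h₂₁ := dot_le_maxDiff_of_mem_bp (hb₂ e he).1 v₁
  simp only [← dot_eq_dotProduct]
  rw [(hb₁ e he).2, (hb₂ e he).2]
  -- each edge contributes at least `w e * (maxDiff e v₁ - maxDiff e v₂) ^ 2`
  nlinarith [mul_nonneg (H.w_pos e he).le (sq_nonneg (maxDiff e v₁ - maxDiff e v₂)),
    mul_nonneg (H.w_pos e he).le (mul_nonneg (maxDiff_nonneg hne v₂) (sub_nonneg.2 h₂₁)),
    mul_nonneg (H.w_pos e he).le (mul_nonneg (maxDiff_nonneg hne v₁) (sub_nonneg.2 h₁₂))]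

lemma mem_lap_add_const {H : Hypergraph V} {v h : V → ℝ} (hh : h ∈ Lap H v) (c : ℝ) :
    h ∈ Lap H (v + fun _ => c) := by
  obtain ⟨b, hb, rfl⟩ := mem_lap_iff.1 hh
  refine mem_lap_iff.2 ⟨b, fun e he => ⟨(hb e he).1, ?_⟩, by simp only [maxDiff_add_const]⟩
  rw [maxDiff_add_const, dot_eq_dotProduct, dotProduct_add, ← dot_eq_dotProduct,
    ← dot_eq_dotProduct, dot_const_of_mem_bp (hb e he).1, add_zero, (hb e he).2]

lemma inn_sub_self_le_of_mem_nl {H : Hypergraph V} {l : ℝ} (hl : 0 ≤ l)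
    {g₁ g₂ h₁ h₂ : V → ℝ} (hh₁ : h₁ ∈ NL H g₁) (hh₂ : h₂ ∈ NL H g₂) :
    inn H (g₁ - g₂) (g₁ - g₂) ≤ inn H ((g₁ + l • h₁) - (g₂ + l • h₂)) (g₁ - g₂) := by
  have hmono : 0 ≤ inn H (h₁ - h₂) (g₁ - g₂) := by
    have hD : Dinv H (g₁ - g₂) = Dinv H g₁ - Dinv H g₂ := funext fun z => sub_div _ _ _
    rw [inn_eq_dot_Dinv, hD]
    exact lap_monotone hh₁ hh₂
  have hsplit : (g₁ + l • h₁) - (g₂ + l • h₂) = (g₁ - g₂) + l • (h₁ - h₂) := by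
    rw [smul_sub]; abel
  simp only [hsplit, inn_eq_dot_Dinv, dot_eq_dotProduct, add_dotProduct, smul_dotProduct,
    smul_eq_mul] at hmono ⊢
  nlinarith

/-- Twice `Qform`: the square of `maxDiff e v ≥ 0` is the largest squared difference on `e`. -/
def energy (H : Hypergraph V) (v : V → ℝ) : ℝ := ∑ e ∈ H.E, H.w e * maxDiff e v ^ 2

/-- Twice the Moreau–Yosida functional whose minimiser is `Resolvent H l f`. -/
def yosidaObjective (H : Hypergraph V) (l : ℝ) (f g : V → ℝ) : ℝ :=
  inn H (g - f) (g - f) + l * energy H (Dinv H g)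

/-- Half the right derivative of `energy H` at `v` in the direction `w`. -/
def energyDeriv (H : Hypergraph V) (v w : V → ℝ) : ℝ :=
  ∑ e ∈ H.E, H.w e * maxDiff e v * dirMaxDiff e v w

lemma energy_nonneg (H : Hypergraph V) (v : V → ℝ) : 0 ≤ energy H v :=
  Finset.sum_nonneg fun e he => mul_nonneg (H.w_pos e he).le (sq_nonneg _)

lemma continuous_yosidaObjective (H : Hypergraph V) (l : ℝ) (f : V → ℝ) :
    Continuous (yosidaObjective H l f) := by
  have hE : Continuous (energy H) :=
    continuous_finsetSum _ fun e he => (continuous_maxDiff (H.e_nonempty e he)).pow 2 |>.const_mul _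
  have hD : Continuous (Dinv H) := continuous_pi fun z => (continuous_apply z).div_const _
  unfold yosidaObjective inn
  fun_prop

lemma tendsto_yosidaObjective_cocompact [Nonempty V] {H : Hypergraph V}
    (hdeg : ∀ x, 0 < deg H x) {l : ℝ} (hl : 0 ≤ l) (f : V → ℝ) :
    Tendsto (yosidaObjective H l f) (cocompact (V → ℝ)) atTop := by
  have hvol : 0 < vol H := Finset.sum_pos (fun z _ => hdeg z) Finset.univ_nonempty
  have hlow : Tendsto (fun g : V → ℝ => (‖g‖ - ‖f‖) ^ 2 / vol H) (cocompact _) atTop :=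
    ((tendsto_pow_atTop two_ne_zero).comp
      (tendsto_atTop_add_const_right _ _ tendsto_norm_cocompact_atTop)).atTop_div_const hvol
  refine tendsto_atTop_mono' _ ?_ hlow
  filter_upwards [tendsto_norm_cocompact_atTop.eventually_ge_atTop ‖f‖] with g hg
  have hnorm := norm_sq_le_vol_mul_inn_self hdeg (g - f)
  calc (‖g‖ - ‖f‖) ^ 2 / vol H ≤ ‖g - f‖ ^ 2 / vol H := by
        gcongr
        exact norm_sub_norm_le g f
    _ ≤ inn H (g - f) (g - f) := by rw [div_le_iff₀' hvol]; exact hnorm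
    _ ≤ yosidaObjective H l f g := le_add_of_nonneg_right (mul_nonneg hl (energy_nonneg H _))

lemma eventually_yosidaObjective_add_smul {H : Hypergraph V} (hdeg : ∀ x, 0 < deg H x)
    (l : ℝ) (f g w : V → ℝ) :
    ∃ b : ℝ, ∀ᶠ t in 𝓝[>] (0 : ℝ), yosidaObjective H l f (g + t • (deg H * w)) =
      yosidaObjective H l f g
        + t * (2 * dot (g - f) w
          + 2 * l * energyDeriv H (Dinv H g) w)
        + t ^ 2 * b := by
  refine ⟨inn H (deg H * w) (deg H * w) + l * ∑ e ∈ H.E, H.w e * dirMaxDiff e (Dinv H g) w ^ 2, ?_⟩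
  filter_upwards [(eventually_all_finset H.E).2 fun e he =>
    eventually_maxDiff_add_smul (H.e_nonempty e he) (Dinv H g) w] with t ht
  have hD : Dinv H (g + t • (deg H * w)) = Dinv H g + t • w := by
    funext z
    simp only [Dinv, Pi.add_apply, Pi.smul_apply, Pi.mul_apply, smul_eq_mul]
    field_simp [(hdeg z).ne']
  have hinn : inn H (g + t • (deg H * w) - f) (g + t • (deg H * w) - f) =
      inn H (g - f) (g - f) + t * (2 * dot (g - f) w) + t ^ 2 * inn H (deg H * w) (deg H * w) := by
    have hcross : dot (g - f) w = ∑ z, (g - f) z * (deg H * w) z / deg H z :=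
      Finset.sum_congr rfl fun z _ => by
        simp only [Pi.mul_apply]; field_simp [(hdeg z).ne']
    simp only [hcross, inn, Finset.mul_sum, ← Finset.sum_add_distrib]
    refine Finset.sum_congr rfl fun z _ => ?_
    simp only [Pi.add_apply, Pi.sub_apply, Pi.smul_apply, smul_eq_mul]
    ring
  have henergy : energy H (Dinv H g + t • w) = energy H (Dinv H g)
      + t * (2 * energyDeriv H (Dinv H g) w)
      + t ^ 2 * ∑ e ∈ H.E, H.w e * dirMaxDiff e (Dinv H g) w ^ 2 := by
    simp only [energy, energyDeriv, Finset.mul_sum, ← Finset.sum_add_distrib]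
    exact Finset.sum_congr rfl fun e he => by rw [ht e he]; ring
  rw [yosidaObjective, yosidaObjective, hD, hinn, henergy]
  ring

lemma dot_sub_le_of_isMinimizer {H : Hypergraph V} (hdeg : ∀ x, 0 < deg H x) {l : ℝ}
    {f g : V → ℝ} (hmin : ∀ g', yosidaObjective H l f g ≤ yosidaObjective H l f g')
    (w : V → ℝ) :
    dot (f - g) w ≤ l * energyDeriv H (Dinv H g) w := by
  obtain ⟨b, hb⟩ := eventually_yosidaObjective_add_smul hdeg l f g w
  have h : 0 ≤ 2 * dot (g - f) w
      + 2 * l * energyDeriv H (Dinv H g) w :=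
    nonneg_of_eventually_nonneg_mul_add_sq (b := b)
      (hb.mono fun t ht => by linarith [hmin (g + t • (deg H * w))])
  have hswap : dot (f - g) w = -dot (g - f) w := by
    simp only [dot_eq_dotProduct, ← neg_dotProduct, neg_sub]
  linarith

lemma mem_lap_of_forall_dot_le [Nonempty V] {H : Hypergraph V} {v p : V → ℝ}
    (hp : ∀ w, dot p w ≤ energyDeriv H v w) : p ∈ Lap H v := by
  set select : (Finset V → V × V) → V → ℝ := fun B =>
    ∑ e ∈ H.E, (H.w e * maxDiff e v) • (delta (B e).1 - delta (B e).2)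
  set C : Set (V → ℝ) := select '' {B | ∀ e ∈ H.E, B e ∈ argmaxPairs e v}
  have hCLap : C ⊆ Lap H v := by
    rintro _ ⟨B, hB, rfl⟩
    refine mem_lap_iff.2 ⟨fun e => delta (B e).1 - delta (B e).2, fun e he => ⟨?_, ?_⟩, rfl⟩
    · obtain ⟨hx, hy⟩ := Finset.mem_product.1 (mem_argmaxPairs.1 (hB e he)).1
      exact subset_convexHull ℝ _ ⟨_, hx, _, hy, rfl⟩
    · rw [dot_delta_sub_delta]
      exact (mem_argmaxPairs.1 (hB e he)).2
  refine convexHull_min hCLap (convex_lap H v) ?_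
  by_contra hnot
  obtain ⟨F, u, hFC, hFp⟩ := geometric_hahn_banach_closed_point (convex_convexHull ℝ C)
    ((Set.toFinite C).isClosed_convexHull ℝ) hnot
  set w : V → ℝ := fun z => F fun j => if z = j then 1 else 0
  have hF : ∀ b, F b = dot b w := fun b => by
    rw [← F.coe_coe, F.toLinearMap.pi_apply_eq_sum_univ b]
    simp [dot, w]
  -- the selection maximising the `w`-differences realises the bound `hp w`
  choose! B hBA hBw using fun e (he : e ∈ H.E) =>
    exists_eq_csSup_image_finset (fun p : V × V => w p.1 - w p.2)
      (argmaxPairs_nonempty (H.e_nonempty e he) v)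
  have hsel : dot (select B) w = energyDeriv H v w := by
    simp only [select, energyDeriv, dot_eq_dotProduct, sum_dotProduct, smul_dotProduct, smul_eq_mul]
    exact Finset.sum_congr rfl fun e he => by
      rw [← dot_eq_dotProduct, dot_delta_sub_delta, hBw e he]; rfl
  have hlt := hFC _ (subset_convexHull ℝ C ⟨B, hBA, rfl⟩)
  rw [hF, hsel] at hlt
  rw [hF] at hFp
  linarith [hp w]

lemma exists_eq_add_smul_mem_nl [Nonempty V] {H : Hypergraph V} (hdeg : ∀ x, 0 < deg H x)
    {l : ℝ} (hl : 0 < l) (f : V → ℝ) : ∃ g, ∃ h ∈ NL H g, f = g + l • h := by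
  obtain ⟨g, hg⟩ := (continuous_yosidaObjective H l f).exists_forall_le
    (tendsto_yosidaObjective_cocompact hdeg hl.le f)
  refine ⟨g, l⁻¹ • (f - g), mem_lap_of_forall_dot_le fun w => ?_, ?_⟩
  · rw [dot_eq_dotProduct, smul_dotProduct, smul_eq_mul, inv_mul_le_iff₀ hl, ← dot_eq_dotProduct]
    exact dot_sub_le_of_isMinimizer hdeg hg w
  · rw [smul_smul, mul_inv_cancel₀ hl.ne', one_smul, add_sub_cancel]

lemma resolvent_spec [Nonempty V] {H : Hypergraph V} (hdeg : ∀ x, 0 < deg H x) {l : ℝ}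
    (hl : 0 < l) (f : V → ℝ) : ∃ h ∈ NL H (Resolvent H l f), f = Resolvent H l f + l • h :=
  Classical.epsilon_spec (exists_eq_add_smul_mem_nl hdeg hl f)

lemma resolvent_add_smul_of_mem_nl [Nonempty V] {H : Hypergraph V} (hdeg : ∀ x, 0 < deg H x)
    {l : ℝ} (hl : 0 < l) {g h : V → ℝ} (hh : h ∈ NL H g) : Resolvent H l (g + l • h) = g := by
  obtain ⟨h', hh', hf⟩ := resolvent_spec hdeg hl (g + l • h)
  refine eq_of_inn_sub_self_nonpos hdeg ?_
  simpa [← hf, inn_zero_left] using inn_sub_self_le_of_mem_nl hl.le hh' hh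

lemma resolvent_add_smul_deg [Nonempty V] {H : Hypergraph V} (hdeg : ∀ x, 0 < deg H x)
    {l : ℝ} (hl : 0 < l) (f : V → ℝ) (c : ℝ) :
    Resolvent H l (f + c • deg H) = Resolvent H l f + c • deg H := by
  obtain ⟨h, hh, hf⟩ := resolvent_spec hdeg hl f
  have hD : Dinv H (Resolvent H l f + c • deg H) = Dinv H (Resolvent H l f) + fun _ => c := by
    funext z
    simp only [Dinv, Pi.add_apply, Pi.smul_apply, smul_eq_mul]
    field_simp [(hdeg z).ne']
  have hh' : h ∈ NL H (Resolvent H l f + c • deg H) := by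
    rw [NL, hD]
    exact mem_lap_add_const hh c
  calc Resolvent H l (f + c • deg H)
      = Resolvent H l ((Resolvent H l f + c • deg H) + l • h) := by
        nth_rewrite 1 [hf]; abel_nf
    _ = Resolvent H l f + c • deg H := resolvent_add_smul_of_mem_nl hdeg hl hh'

lemma inn_resolvent_sub_le [Nonempty V] {H : Hypergraph V} (hdeg : ∀ x, 0 < deg H x)
    {l : ℝ} (hl : 0 < l) (f f' : V → ℝ) :
    inn H (Resolvent H l f - Resolvent H l f') (Resolvent H l f - Resolvent H l f')
      ≤ inn H (f - f') (f - f') := by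
  obtain ⟨h, hh, hf⟩ := resolvent_spec hdeg hl f
  obtain ⟨h', hh', hf'⟩ := resolvent_spec hdeg hl f'
  have hfirm := inn_sub_self_le_of_mem_nl hl.le hh hh'
  rw [← hf, ← hf'] at hfirm
  linarith [two_mul_inn_le hdeg (f - f') (Resolvent H l f - Resolvent H l f')]

lemma continuous_resolvent [Nonempty V] {H : Hypergraph V} (hdeg : ∀ x, 0 < deg H x)
    {l : ℝ} (hl : 0 < l) : Continuous (Resolvent H l) := by
  refine continuous_pi fun z => continuous_iff_continuousAt.2 fun f => ?_
  have hbound : Tendsto (fun f' => √(deg H z * inn H (f' - f) (f' - f))) (𝓝 f) (𝓝 0) := by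
    have hc : Continuous fun f' : V → ℝ => √(deg H z * inn H (f' - f) (f' - f)) := by
      unfold inn; fun_prop
    simpa [inn] using hc.tendsto f
  refine tendsto_iff_dist_tendsto_zero.2 (squeeze_zero (fun _ => dist_nonneg) (fun f' => ?_) hbound)
  rw [Real.dist_eq]
  refine Real.abs_le_sqrt
    ((sq_le_deg_mul_inn_self hdeg (Resolvent H l f' - Resolvent H l f) z).trans ?_)
  exact mul_le_mul_of_nonneg_left (inn_resolvent_sub_le hdeg hl f' f) (hdeg z).le

lemma inn_add_smul_deg_delta_sub_delta {H : Hypergraph V} (hdeg : ∀ x, 0 < deg H x)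
    (f : V → ℝ) (c : ℝ) (a b : V) :
    inn H (f + c • deg H) (delta a - delta b) = inn H f (delta a - delta b) := by
  simp only [inn_delta_sub_delta, Pi.add_apply, Pi.smul_apply, smul_eq_mul]
  field_simp [(hdeg a).ne', (hdeg b).ne']
  ring

lemma isClosed_lip1 (H : Hypergraph V) : IsClosed (Lip1 H) := by
  simp only [Lip1, Set.ofPred_forall, inn_delta_sub_delta]
  exact isClosed_iInter fun a => isClosed_iInter fun b => isClosed_le (by fun_prop) continuous_const

lemma isCompact_lip1_inter_eq_zero {H : Hypergraph V} (hdeg : ∀ x, 0 < deg H x) (x : V) :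
    IsCompact (Lip1 H ∩ {f | f x = 0}) := by
  refine (isCompact_univ_pi fun z =>
    isCompact_Icc (a := -(gdist H x z * deg H z)) (b := gdist H z x * deg H z)).of_isClosed_subset
    ((isClosed_lip1 H).inter (isClosed_eq (continuous_apply x) continuous_const)) ?_
  rintro f ⟨hf, hfx⟩ z -
  have hzx := hf z x
  have hxz := hf x z
  rw [inn_delta_sub_delta, hfx, zero_div, sub_zero] at hzx
  rw [inn_delta_sub_delta, hfx, zero_div, zero_sub, neg_le] at hxz
  rw [div_le_iff₀ (hdeg z)] at hzx
  rw [le_div_iff₀ (hdeg z)] at hxz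
  exact ⟨by linarith, hzx⟩

lemma exists_forall_inn_resolvent_le {H : Hypergraph V} (hdeg : ∀ x, 0 < deg H x) {l : ℝ}
    (hl : 0 < l) (x y : V) : ∃ f₀ ∈ Lip1 H, ∀ f ∈ Lip1 H,
      inn H (Resolvent H l f) (delta x - delta y) ≤ inn H (Resolvent H l f₀) (delta x - delta y) := by
  have : Nonempty V := ⟨x⟩
  set φ : (V → ℝ) → ℝ := fun f => inn H (Resolvent H l f) (delta x - delta y)
  have hφ : Continuous φ := by
    have hJ := continuous_resolvent hdeg hl
    simp only [φ, inn_delta_sub_delta]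
    fun_prop
  have h0 : (0 : V → ℝ) ∈ Lip1 H ∩ {f | f x = 0} :=
    ⟨fun a b => by rw [inn_zero_left]; exact Nat.cast_nonneg _, rfl⟩
  obtain ⟨f₀, ⟨hf₀, -⟩, hmax⟩ :=
    (isCompact_lip1_inter_eq_zero hdeg x).exists_isMaxOn ⟨0, h0⟩ hφ.continuousOn
  refine ⟨f₀, hf₀, fun f hf => ?_⟩
  -- subtracting a multiple of `deg H` changes neither `φ` nor the Lipschitz property
  set c := -(f x / deg H x)
  have hshift : φ (f + c • deg H) = φ f := by
    simp only [φ, resolvent_add_smul_deg hdeg hl, inn_add_smul_deg_delta_sub_delta hdeg]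
  have hfc : f + c • deg H ∈ Lip1 H ∩ {f | f x = 0} := by
    refine ⟨fun a b => by rw [inn_add_smul_deg_delta_sub_delta hdeg]; exact hf a b, ?_⟩
    simp only [Set.mem_ofPred_eq, Pi.add_apply, Pi.smul_apply, smul_eq_mul, c]
    field_simp [(hdeg x).ne']
    ring
  change φ f ≤ φ f₀
  rw [← hshift]
  exact hmax hfc

theorem stmt11_general (H : Hypergraph V)
    (hdeg : ∀ x : V, 0 < deg H x) (l : ℝ) (hl : 0 < l) (x y : V) :
    ∃ f ∈ Lip1 H, inn H (Resolvent H l f) (delta x - delta y) = KD H l x y := by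
  obtain ⟨f₀, hf₀, hmax⟩ := exists_forall_inn_resolvent_le hdeg hl x y
  refine ⟨f₀, hf₀, Eq.symm (IsGreatest.csSup_eq ⟨⟨f₀, hf₀, rfl⟩, ?_⟩)⟩
  rintro _ ⟨f, hf, rfl⟩
  exact hmax f hf

/-- existence of a `λ`-nonlinear Kantorovich potential. -/
theorem stmt11 [Nonempty V] (H : Hypergraph V) (hconn : Connected H)
    (hdeg : ∀ x : V, 0 < deg H x) (l : ℝ) (hl : 0 < l) (x y : V) :
    ∃ f ∈ Lip1 H, inn H (Resolvent H l f) (delta x - delta y) = KD H l x y :=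
  stmt11_general H hdeg l hl x y

end HypRicci
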